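/- arXiv:1606.07729 — 3 statements merged into one kernel-verified Lean document; each statement's English description precedes it below -/
import Mathlib

section
/- For a unitary N×N complex matrix A and any positive integer delays m_1,...,m_N, every root z of the polynomial p(z) = det(D(z^{-1}) − A), where D(z^{-1}) = diag(z^{m_1},...,z^{m_N}), has absolute value 1. -/
/-!
A null vector `v ≠ 0` of `diag(z^{m_i}) - A` satisfies `z^{m_i} v_i = (A v)_i`. Since `A` is an
isometry, `∑ |z|^{2 m_i} |v_i|² = ∑ |v_i|²`, and as every `m_i ≥ 1` the left side is strictly
smaller than the right when `|z| < 1` and strictly larger when `|z| > 1`.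
-/

open Matrix Finset

theorem eq_one_of_sum_pow_mul_eq_sum {ι R : Type*} [Semiring R] [LinearOrder R]
    [IsStrictOrderedRing R] {s : Finset ι} {r : R} (hr : 0 ≤ r) {k : ι → ℕ}
    (hk : ∀ i ∈ s, k i ≠ 0) {a : ι → R} (ha : ∀ i ∈ s, 0 ≤ a i) {j : ι} (hj : j ∈ s)
    (haj : 0 < a j) (h : ∑ i ∈ s, r ^ k i * a i = ∑ i ∈ s, a i) : r = 1 := by
  rcases lt_trichotomy r 1 with hr1 | hr1 | hr1
  · have : ∑ i ∈ s, r ^ k i * a i < ∑ i ∈ s, a i :=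
      sum_lt_sum (fun i hi => mul_le_of_le_one_left (ha i hi) (pow_le_one₀ hr hr1.le))
        ⟨j, hj, mul_lt_of_lt_one_left haj (pow_lt_one₀ hr hr1 (hk j hj))⟩
    exact absurd h this.ne
  · exact hr1
  · have : ∑ i ∈ s, a i < ∑ i ∈ s, r ^ k i * a i :=
      sum_lt_sum (fun i hi => le_mul_of_one_le_left (ha i hi) (one_le_pow₀ hr1.le))
        ⟨j, hj, lt_mul_of_one_lt_left haj (one_lt_pow₀ hr1 (hk j hj))⟩
    exact absurd h this.ne'

namespace Matrix

variable {n 𝕜 : Type*} [Fintype n] [RCLike 𝕜]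

theorem star_dotProduct_self_eq_sum_norm_sq (v : n → 𝕜) :
    star v ⬝ᵥ v = ((∑ i, ‖v i‖ ^ 2 : ℝ) : 𝕜) := by
  simp [dotProduct, RCLike.conj_mul]

theorem sum_norm_sq_mulVec_of_conjTranspose_mul_self [DecidableEq n] {A : Matrix n n 𝕜}
    (hA : Aᴴ * A = 1) (v : n → 𝕜) : ∑ i, ‖(A *ᵥ v) i‖ ^ 2 = ∑ i, ‖v i‖ ^ 2 := by
  apply RCLike.ofReal_injective (K := 𝕜)
  rw [← star_dotProduct_self_eq_sum_norm_sq, ← star_dotProduct_self_eq_sum_norm_sq,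
    star_mulVec, dotProduct_mulVec, vecMul_vecMul, hA, vecMul_one]

end Matrix

/-- Every root of `det(diag(z^{m_1},...,z^{m_N}) - A)` for a unitary matrix `A`
and positive integer delays `m` is unimodular. -/
theorem unitary_is_unilossless {N : ℕ} (A : Matrix (Fin N) (Fin N) ℂ)
    (hA : A * A.conjTranspose = 1)
    (m : Fin N → ℕ) (hm : ∀ i, 1 ≤ m i) (z : ℂ)
    (hz : (Matrix.diagonal (fun i => z ^ m i) - A).det = 0) :
    ‖z‖ = 1 := by
  obtain ⟨v, hv, hDv⟩ := exists_mulVec_eq_zero_iff.mpr hz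
  obtain ⟨j, hj⟩ := Function.ne_iff.mp hv
  have hDA : diagonal (fun i => z ^ m i) *ᵥ v = A *ᵥ v := by
    rwa [sub_mulVec, sub_eq_zero] at hDv
  have hnorm := sum_norm_sq_mulVec_of_conjTranspose_mul_self (mul_eq_one_comm.mp hA) v
  simp only [← hDA, mulVec_diagonal, norm_mul, norm_pow, mul_pow, ← pow_mul] at hnorm
  refine eq_one_of_sum_pow_mul_eq_sum (norm_nonneg z) (fun i _ => ?_) (fun i _ => ?_)
    (mem_univ j) ?_ hnorm
  · exact mul_ne_zero (Nat.one_le_iff_ne_zero.mp (hm i)) two_ne_zero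
  · positivity
  · exact pow_pos (norm_pos_iff.mpr hj) 2
end

section
/- (Cohn's theorem) All zeros of a complex polynomial p lie on the unit circle if and only if p is self-inversive and all zeros of its derivative p' lie in the closed unit disk. -/
/-!
Write `p^*(z) = z^n · conj (p (1 / conj z))` (`conjReflect n p`, with `n = deg p`), so that `p` is
self-inversive iff `p = ε p^*`. If all zeros of `p` lie on the unit circle, then `1 - conj a z` is a
constant multiple of `z - a` for each zero `a`, so factoring shows that `p^*` is a multiple of `p`;
and Gauss–Lucas puts the zeros of `p'` in the convex hull of those of `p`.

Conversely, differentiating `p = ε p^*` gives `n p = z p' + ε (p')^*`. Since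
`|1 - conj a z| ≤ |z - a|` for `|a| ≤ 1 ≤ |z|`, factoring `p'` gives `|(p')^*(z)| ≤ |p'(z)|` for
`|z| ≥ 1`, so a zero `z` of `p` with `|z| > 1` would satisfy `|z| |p'(z)| ≤ |p'(z)|` with
`p'(z) ≠ 0`. Zeros inside the disk are then excluded by the symmetry `z ↦ 1 / conj z` of the zero
set of a self-inversive polynomial.
-/

open Polynomial

/-- A polynomial `p` of degree `n` is self-inversive if there is `ε ∈ ℂ` such that
`c_{n-j} = ε ⬝ conj(c_j)` for all `0 ≤ j ≤ n`. -/
def SelfInversive (p : Polynomial ℂ) : Prop :=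
  ∃ ε : ℂ, ∀ j ≤ p.natDegree,
    p.coeff (p.natDegree - j) = ε * (starRingEnd ℂ) (p.coeff j)

open ComplexConjugate

theorem Multiset.norm_prod {α : Type*} [NormedField α] (s : Multiset α) :
    ‖s.prod‖ = (s.map (‖·‖)).prod :=
  map_multiset_prod (normHom : α →*₀ ℝ) s

theorem Complex.norm_one_sub_conj_mul_le {z w : ℂ} (hz : ‖z‖ ≤ 1) (hw : 1 ≤ ‖w‖) :
    ‖1 - conj z * w‖ ≤ ‖w - z‖ := by
  have key : ‖w - z‖ ^ 2 - ‖1 - conj z * w‖ ^ 2 = (1 - ‖z‖ ^ 2) * (‖w‖ ^ 2 - 1) := by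
    simp only [← Complex.normSq_eq_norm_sq, Complex.normSq_apply, Complex.sub_re, Complex.sub_im,
      Complex.one_re, Complex.one_im, Complex.mul_re, Complex.mul_im, Complex.conj_re,
      Complex.conj_im]
    ring
  have hz2 : ‖z‖ ^ 2 ≤ 1 := by nlinarith [norm_nonneg z]
  have hw2 : 1 ≤ ‖w‖ ^ 2 := by nlinarith
  refine (pow_le_pow_iff_left₀ (norm_nonneg _) (norm_nonneg _) two_ne_zero).1 ?_
  nlinarith [mul_nonneg (sub_nonneg.2 hz2) (sub_nonneg.2 hw2)]

namespace Polynomial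

section Reflect

variable {R : Type*} [CommRing R]

theorem reflect_X_sub_C (a : R) : reflect 1 (X - C a) = 1 - C a * X := by
  simp [reflect_sub, reflect_C]

theorem reflect_multiset_prod_X_sub_C [Nontrivial R] (s : Multiset R) :
    reflect (Multiset.card s) (s.map (X - C ·)).prod = (s.map (1 - C · * X)).prod := by
  induction s using Multiset.induction with
  | empty => simp
  | cons a s ih =>
    rw [Multiset.map_cons, Multiset.prod_cons, Multiset.card_cons, add_comm,
      reflect_mul _ _ (natDegree_X_sub_C a).le (natDegree_multiset_prod_X_sub_C_eq_card s).le, ih,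
      reflect_X_sub_C, Multiset.map_cons, Multiset.prod_cons]

theorem X_mul_derivative_reflect_add_reflect_derivative {N : ℕ} {q : R[X]}
    (hq : q.natDegree ≤ N) :
    X * derivative (reflect N q) + reflect (N - 1) (derivative q) = C (N : R) * reflect N q := by
  have hcoeff : ∀ i, N < i → q.coeff i = 0 := fun i hi =>
    coeff_eq_zero_of_natDegree_lt (hq.trans_lt hi)
  ext (_ | j)
  · rcases Nat.eq_zero_or_pos N with rfl | hN
    · simp [coeff_reflect, coeff_derivative, hcoeff 1 one_pos]
    · have hcast : ((N - 1 : ℕ) : R) + 1 = N := by rw [← Nat.cast_add_one, Nat.sub_add_cancel hN]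
      simp [coeff_reflect, coeff_derivative, Nat.sub_add_cancel hN, hcast, mul_comm]
  · rw [coeff_add, coeff_X_mul, coeff_derivative, coeff_reflect, coeff_reflect, coeff_derivative,
      coeff_C_mul, coeff_reflect]
    rcases lt_trichotomy (j + 1) N with hj | rfl | hj
    · have hrev : revAt (N - 1) (j + 1) + 1 = revAt N (j + 1) := by
        rw [revAt_le (by omega), revAt_le hj.le]; omega
      have hsum : revAt (N - 1) (j + 1) + 1 + (j + 1) = N := by rw [hrev, revAt_le hj.le]; omega
      have hcast : ((revAt (N - 1) (j + 1) : ℕ) : R) + 1 + (j + 1) = N := by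
        exact_mod_cast congrArg (Nat.cast (R := R)) hsum
      rw [hrev]
      linear_combination q.coeff (revAt N (j + 1)) * hcast
    · rw [revAt_le le_rfl, Nat.sub_self, revAt_eq_self_of_lt (by omega),
        hcoeff (j + 1 + 1) (by omega)]
      simp [mul_comm]
    · rw [revAt_eq_self_of_lt hj, revAt_eq_self_of_lt (by omega), hcoeff _ hj,
        hcoeff (j + 1 + 1) (by omega)]
      simp

end Reflect

noncomputable def conjReflect (N : ℕ) (p : ℂ[X]) : ℂ[X] :=
  reflect N (p.map (starRingEnd ℂ))

section ConjReflect

variable {N : ℕ} {p : ℂ[X]}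

theorem coeff_conjReflect (i : ℕ) : (conjReflect N p).coeff i = conj (p.coeff (revAt N i)) := by
  simp [conjReflect, coeff_reflect]

theorem conjReflect_C_mul (a : ℂ) : conjReflect N (C a * p) = C (conj a) * conjReflect N p := by
  simp [conjReflect, reflect_C_mul]

@[simp]
theorem conjReflect_conjReflect : conjReflect N (conjReflect N p) = p := by
  ext i
  simp [coeff_conjReflect]

theorem eval_conjReflect (hp : p.natDegree ≤ N) {u : ℂ} (hu : u ≠ 0) :
    (conjReflect N p).eval u = u ^ N * conj (p.eval (conj u)⁻¹) := by
  have : Invertible u⁻¹ := invertibleOfNonzero (inv_ne_zero hu)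
  have h := eval₂_reflect_mul_pow (RingHom.id ℂ) u⁻¹ N (p.map (starRingEnd ℂ))
    (natDegree_map_le.trans hp)
  have hmap : (p.map (starRingEnd ℂ)).eval u⁻¹ = conj (p.eval (conj u)⁻¹) := by
    simpa using eval_map_apply (p := p) (f := starRingEnd ℂ) (conj u)⁻¹
  rw [invOf_eq_inv, inv_inv, eval₂_id, eval₂_id, hmap] at h
  rw [conjReflect, ← h, mul_left_comm, ← mul_pow, mul_inv_cancel₀ hu, one_pow, mul_one]

theorem X_mul_derivative_conjReflect_add_conjReflect_derivative (hp : p.natDegree ≤ N) :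
    X * derivative (conjReflect N p) + conjReflect (N - 1) (derivative p) =
      C (N : ℂ) * conjReflect N p := by
  rw [conjReflect, conjReflect, ← derivative_map]
  exact X_mul_derivative_reflect_add_reflect_derivative (natDegree_map_le.trans hp)

theorem conjReflect_eq_prod_roots :
    conjReflect p.natDegree p =
      C (conj p.leadingCoeff) * (p.roots.map fun z => 1 - C (conj z) * X).prod := by
  have hmap : p.map (starRingEnd ℂ) =
      C (conj p.leadingCoeff) * ((p.roots.map conj).map (X - C ·)).prod := by
    conv_lhs => rw [(IsAlgClosed.splits p).eq_prod_roots]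
    simp [Polynomial.map_multiset_prod, Multiset.map_map]
  have hdeg : p.natDegree = Multiset.card (p.roots.map conj) := by
    rw [Multiset.card_map, (IsAlgClosed.splits p).natDegree_eq_card_roots]
  rw [conjReflect, hmap, reflect_C_mul, hdeg, reflect_multiset_prod_X_sub_C, Multiset.map_map]
  rfl

theorem norm_eval_conjReflect_le (hroots : ∀ z, p.IsRoot z → ‖z‖ ≤ 1) {w : ℂ} (hw : 1 ≤ ‖w‖) :
    ‖(conjReflect p.natDegree p).eval w‖ ≤ ‖p.eval w‖ := by
  rw [conjReflect_eq_prod_roots, (IsAlgClosed.splits p).eval_eq_prod_roots, eval_mul, eval_C,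
    eval_multiset_prod, Multiset.map_map, norm_mul, norm_mul, Complex.norm_conj,
    Multiset.norm_prod, Multiset.norm_prod, Multiset.map_map, Multiset.map_map]
  refine mul_le_mul_of_nonneg_left (Multiset.prod_map_le_prod_map₀ _ _ (fun _ _ => norm_nonneg _)
    fun z hz => ?_) (norm_nonneg _)
  simpa using Complex.norm_one_sub_conj_mul_le (hroots z (isRoot_of_mem_roots hz)) hw

end ConjReflect

theorem norm_le_one_of_isRoot_derivative {p : ℂ[X]} (hp : 0 < p.natDegree)
    (h : ∀ z, p.IsRoot z → ‖z‖ ≤ 1) {w : ℂ} (hw : p.derivative.IsRoot w) : ‖w‖ ≤ 1 := by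
  have hmem : w ∈ p.derivative.rootSet ℂ := by
    rw [mem_rootSet]
    exact ⟨derivative_ne_zero.2 hp.ne', by simpa using hw⟩
  have hdisk : p.rootSet ℂ ⊆ Metric.closedBall 0 1 := fun z hz => by
    simpa using h z (by simpa using (mem_rootSet.1 hz).2)
  simpa using convexHull_min hdisk (convex_closedBall 0 1)
    (rootSet_derivative_subset_convexHull_rootSet (natDegree_pos_iff_degree_pos.1 hp) hmem)

section SelfInversive

variable {p : ℂ[X]}

theorem selfInversive_iff_exists_eq_C_mul_conjReflect :
    SelfInversive p ↔ ∃ ε, p = C ε * conjReflect p.natDegree p := by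
  constructor
  · rintro ⟨ε, hε⟩
    refine ⟨ε, Polynomial.ext fun i => ?_⟩
    rw [coeff_C_mul, coeff_conjReflect]
    rcases le_or_gt i p.natDegree with hi | hi
    · have := hε (p.natDegree - i) (Nat.sub_le _ _)
      rwa [Nat.sub_sub_self hi, ← revAt_le hi] at this
    · rw [revAt_eq_self_of_lt hi, coeff_eq_zero_of_natDegree_lt hi, map_zero, mul_zero]
  · rintro ⟨ε, hε⟩
    refine ⟨ε, fun j hj => ?_⟩
    have := congrArg (coeff · (p.natDegree - j)) hε
    simpa only [coeff_C_mul, coeff_conjReflect, revAt_le (Nat.sub_le _ _),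
      Nat.sub_sub_self hj] using this

theorem selfInversive_of_forall_isRoot_norm_eq_one (h : ∀ z, p.IsRoot z → ‖z‖ = 1) :
    SelfInversive p := by
  have hp0 : p ≠ 0 := by
    rintro rfl
    simpa using h 0 (by simp)
  have hfactor : (p.roots.map fun z => 1 - C (conj z) * X) =
      p.roots.map fun z => C (-conj z) * (X - C z) :=
    Multiset.map_congr rfl fun z hz => by
      have hz1 : conj z * z = 1 := by
        rw [mul_comm, Complex.mul_conj', h z (isRoot_of_mem_roots hz)]; norm_num
      rw [mul_sub, ← C_mul, neg_mul, hz1, map_neg, map_neg, map_one]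
      ring
  have hprod : (p.roots.map fun z => C (-conj z)).prod = C (p.roots.map fun z => -conj z).prod := by
    rw [map_multiset_prod, Multiset.map_map]
    rfl
  set μ := conj p.leadingCoeff * (p.roots.map fun z => -conj z).prod * p.leadingCoeff⁻¹
  have hμ : conjReflect p.natDegree p = C μ * p := by
    conv_rhs => rw [(IsAlgClosed.splits p).eq_prod_roots]
    rw [conjReflect_eq_prod_roots, hfactor, Multiset.prod_map_mul, hprod, ← mul_assoc, ← mul_assoc,
      ← C_mul, ← C_mul, inv_mul_cancel_right₀ (leadingCoeff_ne_zero.2 hp0)]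
  refine selfInversive_iff_exists_eq_C_mul_conjReflect.2 ⟨conj μ, ?_⟩
  rw [← conjReflect_C_mul, ← hμ, conjReflect_conjReflect]

theorem norm_eq_one_of_eq_C_mul_conjReflect {N : ℕ} {ε : ℂ} (hp0 : p ≠ 0)
    (hε : p = C ε * conjReflect N p) : ‖ε‖ = 1 := by
  have hconj : conjReflect N p = C (conj ε) * p := by
    conv_lhs => rw [hε]
    rw [conjReflect_C_mul, conjReflect_conjReflect]
  have hunit : C (ε * conj ε) * p = C 1 * p := by
    rw [C_mul, mul_assoc, ← hconj, ← hε, C_1, one_mul]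
  have := C_inj.1 (mul_right_cancel₀ hp0 hunit)
  rw [Complex.mul_conj'] at this
  exact (pow_eq_one_iff_of_nonneg (norm_nonneg ε) two_ne_zero).1 (by exact_mod_cast this)

theorem X_mul_derivative_add_C_mul_conjReflect_derivative {ε : ℂ}
    (hε : p = C ε * conjReflect p.natDegree p) :
    X * derivative p + C ε * conjReflect (p.natDegree - 1) (derivative p) =
      C (p.natDegree : ℂ) * p := by
  have h := X_mul_derivative_conjReflect_add_conjReflect_derivative (le_refl p.natDegree)
  have hd : derivative p = C ε * derivative (conjReflect p.natDegree p) := by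
    rw [← derivative_C_mul, ← hε]
  linear_combination C ε * h + X * hd - C (p.natDegree : ℂ) * hε

theorem norm_le_one_of_isRoot {ε : ℂ} (hp0 : p ≠ 0) (hε : p = C ε * conjReflect p.natDegree p)
    (hd : ∀ z, p.derivative.IsRoot z → ‖z‖ ≤ 1) {w : ℂ} (hw : p.IsRoot w) : ‖w‖ ≤ 1 := by
  by_contra! hw1
  have hdw : p.derivative.eval w ≠ 0 := fun h0 => hw1.not_ge (hd w h0)
  have heval := congrArg (eval w) (X_mul_derivative_add_C_mul_conjReflect_derivative hε)
  rw [eval_add, eval_mul, eval_mul, eval_X, eval_C, eval_mul, eval_C, hw.eq_zero, mul_zero,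
    ← natDegree_derivative] at heval
  have hle : ‖w‖ * ‖p.derivative.eval w‖ ≤ 1 * ‖p.derivative.eval w‖ := by
    rw [← norm_mul, eq_neg_of_add_eq_zero_left heval, norm_neg, norm_mul,
      norm_eq_one_of_eq_C_mul_conjReflect hp0 hε, one_mul, one_mul]
    exact norm_eval_conjReflect_le hd hw1.le
  exact hw1.not_ge (le_of_mul_le_mul_right hle (norm_pos_iff.2 hdw))

theorem isRoot_inv_conj_of_isRoot {ε : ℂ} (hε : p = C ε * conjReflect p.natDegree p) {z : ℂ}
    (hz : p.IsRoot z) (hz0 : z ≠ 0) : p.IsRoot (conj z)⁻¹ := by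
  rw [IsRoot, hε, eval_mul, eval_C, eval_conjReflect le_rfl (by simpa using hz0)]
  simp [hz.eq_zero]

theorem one_le_norm_of_isRoot {ε : ℂ} (hp0 : p ≠ 0) (hε : p = C ε * conjReflect p.natDegree p)
    (hroots : ∀ w, p.IsRoot w → ‖w‖ ≤ 1) {z : ℂ} (hz : p.IsRoot z) : 1 ≤ ‖z‖ := by
  have hz0 : z ≠ 0 := by
    rintro rfl
    have h0 : p.coeff 0 = (C ε * conjReflect p.natDegree p).coeff 0 := congrArg (coeff · 0) hε
    rw [coeff_C_mul, coeff_conjReflect, revAt_zero, coeff_natDegree, coeff_zero_eq_eval_zero,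
      hz.eq_zero] at h0
    have hε0 : ε ≠ 0 := norm_ne_zero_iff.1 (by simp [norm_eq_one_of_eq_C_mul_conjReflect hp0 hε])
    exact mul_ne_zero hε0 ((_root_.map_ne_zero _).2 (leadingCoeff_ne_zero.2 hp0)) h0.symm
  have := hroots _ (isRoot_inv_conj_of_isRoot hε hz hz0)
  rwa [norm_inv, Complex.norm_conj, inv_le_one₀ (norm_pos_iff.2 hz0)] at this

end SelfInversive

end Polynomial

/-- Cohn's theorem: all zeros of a (nonconstant) complex polynomial `p` lie on the
unit circle iff `p` is self-inversive and all zeros of `p'` lie in the closed unit disk. -/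
theorem cohn_theorem (p : Polynomial ℂ) (hp : 0 < p.natDegree) :
    (∀ z : ℂ, p.IsRoot z → ‖z‖ = 1) ↔
      (SelfInversive p ∧ ∀ z : ℂ, p.derivative.IsRoot z → ‖z‖ ≤ 1) := by
  refine ⟨fun h => ⟨selfInversive_of_forall_isRoot_norm_eq_one h,
    fun z => norm_le_one_of_isRoot_derivative hp fun w hw => (h w hw).le⟩, ?_⟩
  rintro ⟨hsi, hd⟩ z hz
  obtain ⟨ε, hε⟩ := selfInversive_iff_exists_eq_C_mul_conjReflect.1 hsi
  have hp0 : p ≠ 0 := ne_zero_of_natDegree_gt hp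
  have hroots : ∀ w, p.IsRoot w → ‖w‖ ≤ 1 := fun w => norm_le_one_of_isRoot hp0 hε hd
  exact (hroots z hz).antisymm (one_le_norm_of_isRoot hp0 hε hroots hz)
end

section
/- If E is an invertible diagonal matrix with E^{-1} A* E = A^{-1} (A* the entrywise conjugate), then setting F diagonal with F*·F^{-1} = E and B = F^{-1} A F, one has B·B* = I (B is conjugate-involutory). -/
/-!
With `E = F̄ F⁻¹`, the hypothesis reads `Ā = E A⁻¹ E⁻¹`, hence
`B̄ = F̄⁻¹ Ā F̄ = F⁻¹ A⁻¹ F = B⁻¹`. This is an identity in any group with an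
endomorphism `σ`, applied in `GL N ℂ` with `σ` the entrywise conjugation.
-/

theorem conj_mul_map_conj_eq_one {G : Type*} [Group G] (σ : G →* G) {a d : G}
    (ha : (σ d * d⁻¹)⁻¹ * σ a * (σ d * d⁻¹) = a⁻¹) :
    d⁻¹ * a * d * σ (d⁻¹ * a * d) = 1 := by
  have hσa : σ a = σ d * d⁻¹ * a⁻¹ * (σ d * d⁻¹)⁻¹ := by
    rw [← ha]
    group
  simp only [map_mul, map_inv, hσa]
  group

namespace Matrix

variable {n R : Type*} [Fintype n] [DecidableEq n] [CommRing R]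

theorem conj_mul_map_conj_eq_one (σ : R →+* R) {A D : Matrix n n R}
    (hA : IsUnit A.det) (hD : IsUnit D.det)
    (h : (D.map σ * D⁻¹)⁻¹ * A.map σ * (D.map σ * D⁻¹) = A⁻¹) :
    D⁻¹ * A * D * (D⁻¹ * A * D).map σ = 1 := by
  obtain ⟨a, rfl⟩ := (isUnit_iff_isUnit_det A).mpr hA
  obtain ⟨d, rfl⟩ := (isUnit_iff_isUnit_det D).mpr hD
  have hGL := _root_.conj_mul_map_conj_eq_one (GeneralLinearGroup.map σ) (a := a) (d := d) <| by
    ext1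
    simpa only [Units.val_mul, coe_units_inv, GeneralLinearGroup.val_map_apply] using h
  simpa only [Units.val_mul, coe_units_inv, GeneralLinearGroup.val_map_apply, Units.val_one]
    using congrArg Units.val hGL

end Matrix

theorem conjugate_involutory_of_diag_similarity_general {N : ℕ}
    (A : Matrix (Fin N) (Fin N) ℂ) (hAinv : IsUnit A.det)
    (e f : Fin N → ℂ) (hf : ∀ i, f i ≠ 0)
    (hEF : (Matrix.diagonal f).map (starRingEnd ℂ) * (Matrix.diagonal f)⁻¹ =
      Matrix.diagonal e)
    (hA : (Matrix.diagonal e)⁻¹ * A.map (starRingEnd ℂ) * Matrix.diagonal e = A⁻¹) :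
    ((Matrix.diagonal f)⁻¹ * A * Matrix.diagonal f) *
      (((Matrix.diagonal f)⁻¹ * A * Matrix.diagonal f).map (starRingEnd ℂ)) = 1 := by
  have hF : IsUnit (Matrix.diagonal f).det := by
    rw [Matrix.det_diagonal]
    exact isUnit_iff_ne_zero.mpr (Finset.prod_ne_zero_iff.mpr fun i _ => hf i)
  rw [← hEF] at hA
  exact Matrix.conj_mul_map_conj_eq_one _ hAinv hF hA

/-- If `E⁻¹ A* E = A⁻¹` (with `A*` the entrywise conjugate) for an invertible diagonal
`E`, and `F` is an invertible diagonal matrix with `F* F⁻¹ = E`, then `B = F⁻¹ A F`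
is conjugate-involutory: `B B* = I`. -/
theorem conjugate_involutory_of_diag_similarity {N : ℕ}
    (A : Matrix (Fin N) (Fin N) ℂ) (hAinv : IsUnit A.det)
    (e f : Fin N → ℂ) (he : ∀ i, e i ≠ 0) (hf : ∀ i, f i ≠ 0)
    (hEF : (Matrix.diagonal f).map (starRingEnd ℂ) * (Matrix.diagonal f)⁻¹ =
      Matrix.diagonal e)
    (hA : (Matrix.diagonal e)⁻¹ * A.map (starRingEnd ℂ) * Matrix.diagonal e = A⁻¹) :
    ((Matrix.diagonal f)⁻¹ * A * Matrix.diagonal f) *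
      (((Matrix.diagonal f)⁻¹ * A * Matrix.diagonal f).map (starRingEnd ℂ)) = 1 :=
  conjugate_involutory_of_diag_similarity_general A hAinv e f hf hEF hA
end
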